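/- The cylinder Σ(r) = M × ∂D(r) ⊂ M × ℝ^k is strictly O(k)-stable if and only if r² > k / λ₁(M), where λ₁(M) is the first positive eigenvalue of the Laplacian on M. -/

import Mathlib

/-!
Strict stability asks for a positive gap `λ` with `∫ |∇u|² - (k/r²) ∫ u² ≥ λ ∫ u²` on mean-zero
`u`. Since `λ₁(M)` is the infimum of the Rayleigh quotient `∫ |∇u|² / ∫ u²` over such `u`, the
best gap is `λ₁(M) - k/r²`, which is positive exactly when `r² > k / λ₁(M)`.
-/

open MeasureTheory

theorem exists_pos_gap_iff_lt {α : Type*} {S : Set α} {a b : α → ℝ} {l : ℝ}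
    (hlow : ∀ x ∈ S, l * b x ≤ a x)
    (hsharp : ∀ ε > 0, ∃ x ∈ S, 0 < b x ∧ a x < (l + ε) * b x) (c : ℝ) :
    (∃ lam > 0, ∀ x ∈ S, lam * b x ≤ a x - c * b x) ↔ c < l := by
  constructor
  · rintro ⟨lam, hlam, hgap⟩
    obtain ⟨x, hxS, hbx, hax⟩ := hsharp lam hlam
    have : (lam + c) * b x < (l + lam) * b x := by linarith [hgap x hxS]
    linarith [lt_of_mul_lt_mul_right this hbx.le]
  · intro hcl
    exact ⟨l - c, sub_pos.mpr hcl, fun x hx ↦ by linarith [hlow x hx]⟩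

/-- `G u` models the pointwise gradient norm `|∇_M u|`, and `lam1` is `λ₁(M)` through its
variational characterization: the optimal lower bound for the Rayleigh quotient of mean-zero
functions (`hlow`, `hsharp`). -/
theorem stmt15_general {M : Type*} [MeasurableSpace M] (μ : Measure M)
    (G : (M → ℝ) → M → ℝ)
    (k : ℕ) (r : ℝ) (hr : 0 < r)
    (lam1 : ℝ) (hlam1pos : 0 < lam1)
    (hlow : ∀ u : M → ℝ, Integrable u μ → (∫ p, u p ∂μ) = 0 →
      lam1 * ∫ p, (u p) ^ 2 ∂μ ≤ ∫ p, (G u p) ^ 2 ∂μ)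
    (hsharp : ∀ ε : ℝ, 0 < ε → ∃ u : M → ℝ, Integrable u μ ∧ (∫ p, u p ∂μ) = 0 ∧
      0 < (∫ p, (u p) ^ 2 ∂μ) ∧
      (∫ p, (G u p) ^ 2 ∂μ) < (lam1 + ε) * ∫ p, (u p) ^ 2 ∂μ) :
    (∃ lam : ℝ, 0 < lam ∧ ∀ u : M → ℝ, Integrable u μ → (∫ p, u p ∂μ) = 0 →
        lam * ∫ p, (u p) ^ 2 ∂μ ≤
          (∫ p, (G u p) ^ 2 ∂μ) - (k / r ^ 2) * ∫ p, (u p) ^ 2 ∂μ) ↔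
      r ^ 2 > k / lam1 := by
  let S : Set (M → ℝ) := {u | Integrable u μ ∧ ∫ p, u p ∂μ = 0}
  have hgap := exists_pos_gap_iff_lt (S := S) (a := fun u ↦ ∫ p, (G u p) ^ 2 ∂μ)
    (b := fun u ↦ ∫ p, (u p) ^ 2 ∂μ) (fun u hu ↦ hlow u hu.1 hu.2)
    (fun ε hε ↦ by
      obtain ⟨u, hui, hu0, hpos, hlt⟩ := hsharp ε hε
      exact ⟨u, ⟨hui, hu0⟩, hpos, hlt⟩)
    (k / r ^ 2)
  simp only [S, Set.mem_ofPred_eq, and_imp, gt_iff_lt] at hgap ⊢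
  rw [hgap, div_lt_comm₀ (by positivity) hlam1pos]

/-- the cylinder `Σ(r) = M × ∂D(r) ⊂ M × ℝ^k` is strictly `O(k)`-stable if
and only if `r² > k / λ₁(M)`.

`O(k)`-invariant functions on `Σ(r)` are identified with functions `u : M → ℝ`; since
`q = k / r²` on `Σ(r)` and the area element is the constant `k ω_k r^{k-1}` times that of
`M`, strict `O(k)`-stability reads: there is `λ > 0` with
`∫_M (|∇u|² − (k/r²) u²) ≥ λ ∫_M u²` for every mean-zero `u`.  The Riemannian structure of
`M` enters only through the gradient-norm operator `G u = |∇_M u|` on a measure space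
`(M, μ)`, and `λ₁(M)` is characterized variationally: it is a lower bound for the Rayleigh
quotient of mean-zero functions (`hlow`), and it is the optimal such bound (`hsharp`). -/
theorem stmt15 {M : Type*} [MeasurableSpace M] (μ : Measure M) [IsFiniteMeasure μ]
    (G : (M → ℝ) → M → ℝ)
    (k : ℕ) (hk : 0 < k) (r : ℝ) (hr : 0 < r)
    (lam1 : ℝ) (hlam1pos : 0 < lam1)
    (hlow : ∀ u : M → ℝ, Integrable u μ → (∫ p, u p ∂μ) = 0 →
      lam1 * ∫ p, (u p) ^ 2 ∂μ ≤ ∫ p, (G u p) ^ 2 ∂μ)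
    (hsharp : ∀ ε : ℝ, 0 < ε → ∃ u : M → ℝ, Integrable u μ ∧ (∫ p, u p ∂μ) = 0 ∧
      0 < (∫ p, (u p) ^ 2 ∂μ) ∧
      (∫ p, (G u p) ^ 2 ∂μ) < (lam1 + ε) * ∫ p, (u p) ^ 2 ∂μ) :
    (∃ lam : ℝ, 0 < lam ∧ ∀ u : M → ℝ, Integrable u μ → (∫ p, u p ∂μ) = 0 →
        lam * ∫ p, (u p) ^ 2 ∂μ ≤
          (∫ p, (G u p) ^ 2 ∂μ) - (k / r ^ 2) * ∫ p, (u p) ^ 2 ∂μ) ↔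
      r ^ 2 > k / lam1 :=
  stmt15_general μ G k r hr lam1 hlam1pos hlow hsharp
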